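/- arXiv:1603.04275 — 6 statements merged into one kernel-verified Lean document; each statement's English description precedes it below -/
import Mathlib

section
/- If S : X → Y is a linear map between Banach spaces and T : Y → Z is a bounded linear map into a Banach space Z, then the separating space of the composite satisfies 𝔖(T ∘ S) = closure of T[𝔖(S)]. -/
def separatingSpace {X Y : Type*} [NormedAddCommGroup X] [NormedAddCommGroup Y]
    (S : X → Y) : Set Y :=
  {y | ∃ x : ℕ → X, Filter.Tendsto x Filter.atTop (nhds 0) ∧
    Filter.Tendsto (fun n => S (x n)) Filter.atTop (nhds y)}

/-!
The separating space of `U` is the fibre over `0` of the closure of the graph of `U`; hence it is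
closed, and by the closed graph theorem a linear `S` between Banach spaces is continuous once its
separating space is `{0}`. Let `M = 𝔖(S)`. If `xₙ → 0` and `S xₙ → [y]` in `Y ⧸ M`, then
`S xₙ - mₙ → y` for some `mₙ ∈ M`; since the closure of the graph is stable under adding `{0} × M`,
`y ∈ M`. So `S` is continuous modulo `M`: if `xₙ → 0` then `S xₙ - mₙ → 0` with `mₙ ∈ M`, and if
moreover `T (S xₙ) → z` then `T mₙ → z`, so `z ∈ closure (T '' M)`. The reverse inclusion holds
because `T` is continuous and `𝔖(T ∘ S)` is closed.
-/

open Filter Topology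

theorem exists_tendsto_sub_of_tendsto_mk {R M : Type*} [Ring R] [SeminormedAddCommGroup M]
    [Module R M] {N : Submodule R M} {f : ℕ → M}
    (hf : Tendsto (fun n => (Submodule.Quotient.mk (f n) : M ⧸ N)) atTop (𝓝 0)) :
    ∃ s : ℕ → M, (∀ n, s n ∈ N) ∧ Tendsto (fun n => f n - s n) atTop (𝓝 0) := by
  choose w hw hw_norm using fun n : ℕ =>
    Submodule.Quotient.norm_mk_lt (Submodule.Quotient.mk (f n) : M ⧸ N)
      (Nat.one_div_pos_of_nat (n := n))
  refine ⟨fun n => f n - w n, fun n => (Submodule.Quotient.eq N).mp (hw n).symm, ?_⟩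
  simp only [sub_sub_cancel]
  rw [tendsto_zero_iff_norm_tendsto_zero] at hf ⊢
  exact squeeze_zero (fun n => norm_nonneg _) (fun n => (hw_norm n).le)
    (by simpa using hf.add tendsto_one_div_add_atTop_nhds_zero_nat)

section General

variable {X Y : Type*} [NormedAddCommGroup X] [NormedAddCommGroup Y]

theorem mem_separatingSpace_iff_mem_closure_graph (U : X → Y) (y : Y) :
    y ∈ separatingSpace U ↔ ((0 : X), y) ∈ closure {p : X × Y | p.2 = U p.1} := by
  rw [mem_closure_iff_seq_limit]
  constructor
  · rintro ⟨x, hx, hUx⟩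
    exact ⟨fun n => (x n, U (x n)), fun n => rfl, hx.prodMk_nhds hUx⟩
  · rintro ⟨p, hp, hlim⟩
    refine ⟨fun n => (p n).1, (continuous_fst.tendsto _).comp hlim, ?_⟩
    exact ((continuous_snd.tendsto _).comp hlim).congr fun n => hp n

theorem isClosed_separatingSpace (U : X → Y) : IsClosed (separatingSpace U) := by
  rw [show separatingSpace U = (fun y => ((0 : X), y)) ⁻¹' closure {p : X × Y | p.2 = U p.1} from
    Set.ext (mem_separatingSpace_iff_mem_closure_graph U)]
  exact isClosed_closure.preimage (Continuous.prodMk_right 0)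

theorem image_separatingSpace_subset {Z : Type*} [NormedAddCommGroup Z] (U : X → Y) {T : Y → Z}
    (hT : Continuous T) : T '' separatingSpace U ⊆ separatingSpace (T ∘ U) := by
  rintro _ ⟨y, ⟨x, hx, hUx⟩, rfl⟩
  exact ⟨x, hx, (hT.tendsto y).comp hUx⟩

end General

section Linear

variable {𝕜 X Y : Type*} [NontriviallyNormedField 𝕜] [NormedAddCommGroup X] [NormedSpace 𝕜 X]
  [NormedAddCommGroup Y] [NormedSpace 𝕜 Y] (S : X →ₗ[𝕜] Y)

theorem LinearMap.coe_graph : (S.graph : Set (X × Y)) = {p | p.2 = S p.1} := rfl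

theorem mem_closure_graph_iff {p : X × Y} :
    p ∈ closure (S.graph : Set (X × Y)) ↔ p.2 - S p.1 ∈ separatingSpace S := by
  have hp : p = (p.1, S p.1) + ((0 : X), p.2 - S p.1) := by ext <;> simp
  have hgraph : (p.1, S p.1) ∈ S.graph.topologicalClosure :=
    S.graph.le_topologicalClosure ((S.mem_graph_iff _).mpr rfl)
  rw [mem_separatingSpace_iff_mem_closure_graph, ← S.coe_graph, ← Submodule.topologicalClosure_coe,
    SetLike.mem_coe, SetLike.mem_coe]
  conv_lhs => rw [hp]
  exact Submodule.add_mem_iff_right _ hgraph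

def separatingSubmodule : Submodule 𝕜 Y :=
  S.graph.topologicalClosure.comap (LinearMap.inr 𝕜 X Y)

theorem coe_separatingSubmodule : (separatingSubmodule S : Set Y) = separatingSpace S := by
  ext y
  rw [mem_separatingSpace_iff_mem_closure_graph, ← S.coe_graph, ← Submodule.topologicalClosure_coe]
  rfl

instance isClosed_separatingSubmodule : IsClosed (separatingSubmodule S : Set Y) :=
  coe_separatingSubmodule S ▸ isClosed_separatingSpace S

theorem continuous_of_separatingSpace_subset_zero [CompleteSpace X] [CompleteSpace Y]
    (h : separatingSpace S ⊆ {0}) : Continuous S := by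
  refine S.continuous_of_isClosed_graph (closure_subset_iff_isClosed.mp fun p hp => ?_)
  exact (S.mem_graph_iff p).mpr (sub_eq_zero.mp (h ((mem_closure_graph_iff S).mp hp)))

theorem separatingSpace_mkQ_comp_subset_zero :
    separatingSpace ((separatingSubmodule S).mkQ ∘ₗ S) ⊆ {0} := by
  rintro q ⟨x, hx, hq⟩
  obtain ⟨y, rfl⟩ := (separatingSubmodule S).mkQ_surjective q
  have hmk : Tendsto (fun n => (Submodule.Quotient.mk (S (x n) - y) : Y ⧸ separatingSubmodule S))
      atTop (𝓝 0) := by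
    simpa [Submodule.Quotient.mk_sub] using hq.sub_const ((separatingSubmodule S).mkQ y)
  obtain ⟨m, hm, hlim⟩ := exists_tendsto_sub_of_tendsto_mk hmk
  have hmem : ∀ n, (x n, S (x n) - m n) ∈ closure (S.graph : Set (X × Y)) := fun n => by
    rw [mem_closure_graph_iff, sub_sub_cancel_left, ← coe_separatingSubmodule]
    exact neg_mem (hm n)
  have hlim' : Tendsto (fun n => S (x n) - m n) atTop (𝓝 y) := by
    simpa [sub_right_comm _ y] using hlim.add_const y
  have hy := (mem_closure_graph_iff S).mp
    (isClosed_closure.mem_of_tendsto (hx.prodMk_nhds hlim') (Eventually.of_forall hmem))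
  rw [map_zero, sub_zero, ← coe_separatingSubmodule] at hy
  exact (Submodule.Quotient.mk_eq_zero _).mpr hy

theorem separatingSpace_comp_subset_closure [CompleteSpace X] [CompleteSpace Y] {Z : Type*}
    [NormedAddCommGroup Z] [NormedSpace 𝕜 Z] (T : Y →L[𝕜] Z) :
    separatingSpace (fun x => T (S x)) ⊆ closure (T '' separatingSpace S) := by
  rintro z ⟨x, hx, hz⟩
  have hQ : Tendsto (fun n => (Submodule.Quotient.mk (S (x n)) : Y ⧸ separatingSubmodule S))
      atTop (𝓝 0) := by
    simpa [Function.comp_def] using ((continuous_of_separatingSpace_subset_zero _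
      (separatingSpace_mkQ_comp_subset_zero S)).tendsto 0).comp hx
  obtain ⟨m, hm, hlim⟩ := exists_tendsto_sub_of_tendsto_mk hQ
  have hTm : Tendsto (fun n => T (m n)) atTop (𝓝 z) := by
    simpa using hz.sub ((T.continuous.tendsto 0).comp hlim)
  refine mem_closure_of_tendsto hTm (Eventually.of_forall fun n => ⟨m n, ?_, rfl⟩)
  exact coe_separatingSubmodule S ▸ hm n

end Linear

theorem separatingSpace_comp_general
    {X Y Z : Type*} [NormedAddCommGroup X] [NormedSpace ℝ X] [CompleteSpace X]
    [NormedAddCommGroup Y] [NormedSpace ℝ Y] [CompleteSpace Y]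
    [NormedAddCommGroup Z] [NormedSpace ℝ Z]
    (S : X →ₗ[ℝ] Y) (T : Y →L[ℝ] Z) :
    separatingSpace (fun x => T (S x)) = closure (T '' separatingSpace S) :=
  (separatingSpace_comp_subset_closure S T).antisymm
    (closure_minimal (image_separatingSpace_subset S T.continuous) (isClosed_separatingSpace _))

/-- For linear S and bounded linear T, 𝔖(T ∘ S) = closure (T '' 𝔖(S)). -/
theorem separatingSpace_comp
    {X Y Z : Type*} [NormedAddCommGroup X] [NormedSpace ℝ X] [CompleteSpace X]
    [NormedAddCommGroup Y] [NormedSpace ℝ Y] [CompleteSpace Y]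
    [NormedAddCommGroup Z] [NormedSpace ℝ Z] [CompleteSpace Z]
    (S : X →ₗ[ℝ] Y) (T : Y →L[ℝ] Z) :
    separatingSpace (fun x => T (S x)) = closure (T '' separatingSpace S) :=
  separatingSpace_comp_general S T
end

section
/- If S : X → Y is a linear map between Banach spaces, T : Y → Z is a bounded linear map, and T vanishes on the separating space 𝔖(S), then the composite T ∘ S is bounded. -/
section ClosureGraph

variable {R X Y : Type*} [Ring R] [NormedAddCommGroup X] [NormedAddCommGroup Y]
  [Module R X] [Module R Y]

theorem sub_mem_separatingSpace_of_mem_closure_graph (S : X →ₗ[R] Y) {p : X × Y}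
    (hp : p ∈ closure (S.graph : Set (X × Y))) : p.2 - S p.1 ∈ separatingSpace S := by
  obtain ⟨u, hu_graph, hu_lim⟩ := mem_closure_iff_seq_limit.mp hp
  have hS_u : ∀ n, S ((u n).1 - p.1) = (u n).2 - S p.1 := fun n => by
    rw [map_sub, ← (S.mem_graph_iff (u n)).mp (hu_graph n)]
  refine ⟨fun n => (u n).1 - p.1, ?_, ?_⟩
  · simpa using hu_lim.fst_nhds.sub_const p.1
  · simpa only [hS_u] using hu_lim.snd_nhds.sub_const (S p.1)

theorem map_snd_eq_map_of_mem_closure_graph {Z : Type*} [AddCommGroup Z] [Module R Z]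
    (S : X →ₗ[R] Y) (T : Y →ₗ[R] Z) (hT : ∀ y ∈ separatingSpace S, T y = 0) {p : X × Y}
    (hp : p ∈ closure (S.graph : Set (X × Y))) : T p.2 = T (S p.1) := by
  rw [← sub_eq_zero, ← map_sub]
  exact hT _ (sub_mem_separatingSpace_of_mem_closure_graph S hp)

end ClosureGraph

theorem continuous_comp_of_separatingSpace_subset_ker_general
    {X Y Z : Type*} [NormedAddCommGroup X] [NormedSpace ℝ X] [CompleteSpace X]
    [NormedAddCommGroup Y] [NormedSpace ℝ Y] [CompleteSpace Y]
    [NormedAddCommGroup Z] [NormedSpace ℝ Z]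
    (S : X →ₗ[ℝ] Y) (T : Y →L[ℝ] Z)
    (h : ∀ y ∈ separatingSpace S, T y = 0) :
    Continuous fun x => T (S x) := by
  let G : Submodule ℝ (X × Y) := S.graph.topologicalClosure
  have : CompleteSpace G := S.graph.isClosed_topologicalClosure.completeSpace_coe
  let π : G →L[ℝ] X := (ContinuousLinearMap.fst ℝ X Y).comp G.subtypeL
  have hπ : Function.Surjective π := fun x =>
    ⟨⟨(x, S x), S.graph.le_topologicalClosure ((S.mem_graph_iff _).mpr rfl)⟩, rfl⟩
  have hTS_π : (fun x => T (S x)) ∘ π = fun p : G => T (p : X × Y).2 := funext fun p =>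
    (map_snd_eq_map_of_mem_closure_graph S T.toLinearMap h p.2).symm
  rw [(π.isQuotientMap hπ).continuous_iff, hTS_π]
  fun_prop

/-- If a bounded linear map T vanishes on 𝔖(S), then T ∘ S is continuous. -/
theorem continuous_comp_of_separatingSpace_subset_ker
    {X Y Z : Type*} [NormedAddCommGroup X] [NormedSpace ℝ X] [CompleteSpace X]
    [NormedAddCommGroup Y] [NormedSpace ℝ Y] [CompleteSpace Y]
    [NormedAddCommGroup Z] [NormedSpace ℝ Z] [CompleteSpace Z]
    (S : X →ₗ[ℝ] Y) (T : Y →L[ℝ] Z)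
    (h : ∀ y ∈ separatingSpace S, T y = 0) :
    Continuous fun x => T (S x) :=
  continuous_comp_of_separatingSpace_subset_ker_general S T h
end

section
/- Every bounded linear map T : ℓ∞ → ℓ¹ is compact. -/
/-!
Write `χ_B` for the indicator of `B` in `ℓ^∞`. The point is that the tails
`∑_{k ≥ N} |(T χ_B) k|` are small uniformly in `B`. Otherwise there are consecutive blocks of
coordinates `I₀ < I₁ < ⋯` and sets `A j` with `∑_{k ∈ I_j} |(T χ_{A j}) k| ≥ ε / 2`. Reading
`T χ_s` on `I_j` against the signs of `T χ_{A j}` gives finitely additive set functions `λ_j` with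
`λ_j (A j) ≥ ε / 2` and `∑_j |λ_j s| ≤ ‖T‖` for every `s`. On the atoms of the Boolean algebra
generated by `A 0, …, A (m - 1)`, Khintchine's inequality yields signs for which `∑_j ±λ_j` has
total variation at least `√(m / 3) * ε / 2`, whereas it is at most `2 ‖T‖`: absurd for large `m`.
Uniform tails on indicators pass to the unit ball by approximating with step functions, so `T` is
the operator-norm limit of its finite-rank truncations.
-/

open Finset Filter Topology
open scoped lp ENNReal

section Khintchine

variable {ι κ : Type*} [DecidableEq κ]

/-- `∑ j ∈ J, ±c j` with sign `+` exactly on `ξ`: summing over `ξ ∈ J.powerset` averages over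
independent random signs. -/
def rademacherSum (J ξ : Finset κ) (c : κ → ℝ) : ℝ :=
  ∑ j ∈ J, if j ∈ ξ then c j else -c j

lemma abs_rademacherSum_le (J ξ : Finset κ) (c : κ → ℝ) :
    |rademacherSum J ξ c| ≤ ∑ j ∈ J, |c j| :=
  (abs_sum_le_sum_abs _ _).trans <| sum_le_sum fun j _ => by split_ifs <;> simp

lemma sum_rademacherSum (J ξ : Finset κ) (G : Finset ι) (c : κ → ι → ℝ) :
    ∑ t ∈ G, rademacherSum J ξ (c · t) = rademacherSum J ξ fun j => ∑ t ∈ G, c j t := by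
  unfold rademacherSum
  rw [sum_comm]
  refine sum_congr rfl fun j _ => ?_
  split_ifs <;> simp

lemma rademacherSum_add (J ξ : Finset κ) (c d : κ → ℝ) :
    rademacherSum J ξ (c + d) = rademacherSum J ξ c + rademacherSum J ξ d := by
  simp only [rademacherSum, ← sum_add_distrib]
  refine sum_congr rfl fun j _ => ?_
  split_ifs <;> simp [add_comm]

lemma rademacherSum_filter_nonneg (J : Finset κ) (c : κ → ℝ) :
    rademacherSum J {j ∈ J | 0 ≤ c j} c = ∑ j ∈ J, |c j| := by
  refine sum_congr rfl fun j hj => ?_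
  by_cases h : 0 ≤ c j
  · simp [hj, h, abs_of_nonneg h]
  · simp [h, abs_of_neg (not_le.1 h)]

lemma rademacherSum_insert {b : κ} {J : Finset κ} (hb : b ∉ J) (ξ : Finset κ) (c : κ → ℝ) :
    rademacherSum (insert b J) ξ c = (if b ∈ ξ then c b else -c b) + rademacherSum J ξ c :=
  sum_insert hb

lemma rademacherSum_insert_of_notMem {b : κ} {J : Finset κ} (hb : b ∉ J) (ξ : Finset κ)
    (c : κ → ℝ) : rademacherSum J (insert b ξ) c = rademacherSum J ξ c :=
  sum_congr rfl fun j hj => by simp [ne_of_mem_of_not_mem hj hb]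

lemma sum_powerset_insert_rademacherSum (f : ℝ → ℝ) {b : κ} {J : Finset κ} (hb : b ∉ J)
    (c : κ → ℝ) :
    ∑ ξ ∈ (insert b J).powerset, f (rademacherSum (insert b J) ξ c) =
      ∑ ξ ∈ J.powerset, (f (rademacherSum J ξ c - c b) + f (rademacherSum J ξ c + c b)) := by
  rw [sum_powerset_insert hb, ← sum_add_distrib]
  refine sum_congr rfl fun ξ hξ => ?_
  have hbξ : b ∉ ξ := fun h => hb (mem_powerset.1 hξ h)
  rw [rademacherSum_insert hb, rademacherSum_insert hb, rademacherSum_insert_of_notMem hb,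
    if_neg hbξ, if_pos (mem_insert_self b ξ), neg_add_eq_sub, add_comm (c b)]

lemma sum_powerset_rademacherSum_sq (J : Finset κ) (c : κ → ℝ) :
    ∑ ξ ∈ J.powerset, rademacherSum J ξ c ^ 2 = 2 ^ #J * ∑ j ∈ J, c j ^ 2 := by
  induction J using Finset.induction_on with
  | empty => simp [rademacherSum]
  | @insert b J hb ih =>
    have h (x : ℝ) : (x - c b) ^ 2 + (x + c b) ^ 2 = 2 * x ^ 2 + 2 * c b ^ 2 := by ring
    simp only [sum_powerset_insert_rademacherSum (· ^ 2) hb, h, sum_add_distrib, ← mul_sum, ih,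
      sum_const, card_powerset, nsmul_eq_mul, sum_insert hb, card_insert_of_notMem hb]
    push_cast
    ring

lemma sum_powerset_rademacherSum_pow_four_le (J : Finset κ) (c : κ → ℝ) :
    ∑ ξ ∈ J.powerset, rademacherSum J ξ c ^ 4 ≤ 3 * 2 ^ #J * (∑ j ∈ J, c j ^ 2) ^ 2 := by
  induction J using Finset.induction_on with
  | empty => simp [rademacherSum]
  | @insert b J hb ih =>
    have h (x : ℝ) : (x - c b) ^ 4 + (x + c b) ^ 4 =
        2 * x ^ 4 + 12 * c b ^ 2 * x ^ 2 + 2 * c b ^ 4 := by ring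
    simp only [sum_powerset_insert_rademacherSum (· ^ 4) hb, h, sum_add_distrib, ← mul_sum,
      sum_powerset_rademacherSum_sq, sum_const, card_powerset, nsmul_eq_mul, sum_insert hb,
      card_insert_of_notMem hb]
    push_cast
    rw [pow_succ (2 : ℝ) #J]
    have h2 : (0 : ℝ) ≤ 2 ^ #J := by positivity
    nlinarith [mul_nonneg (mul_nonneg h2 (sum_nonneg fun j (_ : j ∈ J) => sq_nonneg (c j)))
      (sq_nonneg (c b)), mul_nonneg h2 (pow_nonneg (sq_nonneg (c b)) 2)]

/-- Hölder's inequality `‖f‖₂ ≤ ‖f‖₁ ^ (1/3) * ‖f‖₄ ^ (2/3)`, through two Cauchy–Schwarz steps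
via `∑ |f i| ^ 3`. -/
lemma sum_sq_pow_three_le (s : Finset ι) (f : ι → ℝ) :
    (∑ i ∈ s, f i ^ 2) ^ 3 ≤ (∑ i ∈ s, |f i|) ^ 2 * ∑ i ∈ s, f i ^ 4 := by
  have h₁ : ∑ i ∈ s, f i ^ 2 ≤ √(∑ i ∈ s, |f i|) * √(∑ i ∈ s, |f i| ^ 3) := by
    refine le_of_eq_of_le (sum_congr rfl fun i _ => ?_)
      (Real.sum_sqrt_mul_sqrt_le s (fun i => abs_nonneg (f i)) fun i => by positivity)
    rw [← Real.sqrt_mul (abs_nonneg _), show |f i| * |f i| ^ 3 = (f i ^ 2) ^ 2 by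
      rw [← sq_abs (f i)]; ring, Real.sqrt_sq (sq_nonneg _)]
  have h₂ : ∑ i ∈ s, |f i| ^ 3 ≤ √(∑ i ∈ s, f i ^ 2) * √(∑ i ∈ s, f i ^ 4) := by
    refine le_of_eq_of_le (sum_congr rfl fun i _ => ?_)
      (Real.sum_sqrt_mul_sqrt_le s (fun i => sq_nonneg (f i)) fun i => by positivity)
    rw [← Real.sqrt_mul (sq_nonneg _), show f i ^ 2 * f i ^ 4 = (|f i| ^ 3) ^ 2 by
      rw [pow_abs, sq_abs]; ring, Real.sqrt_sq (by positivity)]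
  set S₂ := ∑ i ∈ s, f i ^ 2
  set S₄ := ∑ i ∈ s, f i ^ 4
  set A := ∑ i ∈ s, |f i|
  set S₃ := ∑ i ∈ s, |f i| ^ 3
  have hS₂ : 0 ≤ S₂ := sum_nonneg fun i _ => sq_nonneg (f i)
  have hS₄ : 0 ≤ S₄ := sum_nonneg fun i _ => by positivity
  have hA : 0 ≤ A := sum_nonneg fun i _ => abs_nonneg (f i)
  have hS₃ : 0 ≤ S₃ := sum_nonneg fun i _ => by positivity
  have k₁ : S₂ ^ 2 ≤ A * S₃ := by
    simpa [mul_pow, Real.sq_sqrt hA, Real.sq_sqrt hS₃] using pow_le_pow_left₀ hS₂ h₁ 2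
  have k₂ : S₃ ^ 2 ≤ S₂ * S₄ := by
    simpa [mul_pow, Real.sq_sqrt hS₂, Real.sq_sqrt hS₄] using pow_le_pow_left₀ hS₃ h₂ 2
  rcases hS₂.eq_or_lt with h0 | hpos
  · rw [← h0, zero_pow three_ne_zero]; positivity
  have : S₂ * S₂ ^ 3 ≤ S₂ * (A ^ 2 * S₄) := by
    nlinarith [mul_le_mul k₁ k₁ (sq_nonneg _) (mul_nonneg hA hS₃),
      mul_le_mul_of_nonneg_left k₂ (sq_nonneg A)]
  exact le_of_mul_le_mul_left this hpos

theorem khintchine (J : Finset κ) (c : κ → ℝ) :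
    2 ^ #J * √(∑ j ∈ J, c j ^ 2) ≤ √3 * ∑ ξ ∈ J.powerset, |rademacherSum J ξ c| := by
  set q := ∑ j ∈ J, c j ^ 2
  set A := ∑ ξ ∈ J.powerset, |rademacherSum J ξ c|
  have hq : 0 ≤ q := sum_nonneg fun j _ => sq_nonneg (c j)
  have hA : 0 ≤ A := sum_nonneg fun ξ _ => abs_nonneg _
  have h2 : (0 : ℝ) < 2 ^ #J := by positivity
  have hsq : (2 ^ #J) ^ 2 * q ≤ 3 * A ^ 2 := by
    rcases hq.eq_or_lt with h0 | hpos
    · rw [← h0, mul_zero]; positivity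
    have hHolder : (2 ^ #J * q) ^ 3 ≤ A ^ 2 * (3 * 2 ^ #J * q ^ 2) := by
      have := sum_sq_pow_three_le J.powerset (rademacherSum J · c)
      rw [sum_powerset_rademacherSum_sq] at this
      exact this.trans (mul_le_mul_of_nonneg_left
        (sum_powerset_rademacherSum_pow_four_le J c) (sq_nonneg A))
    refine le_of_mul_le_mul_right ?_ (by positivity : 0 < 2 ^ #J * q ^ 2)
    linarith
  calc 2 ^ #J * √q = √((2 ^ #J) ^ 2 * q) := by rw [Real.sqrt_mul (sq_nonneg _), Real.sqrt_sq h2.le]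
    _ ≤ √(3 * A ^ 2) := Real.sqrt_le_sqrt hsq
    _ = √3 * A := by rw [Real.sqrt_mul zero_le_three, Real.sqrt_sq hA]

theorem exists_sqrt_card_mul_le_sum_abs_rademacherSum (J : Finset κ) (P : Finset ι)
    (v : κ → ι → ℝ) {a : ℝ} (hv : ∀ j ∈ J, a ≤ ∑ t ∈ P, |v j t|) :
    ∃ ξ ∈ J.powerset, √(#J : ℝ) * a ≤ √3 * ∑ t ∈ P, |rademacherSum J ξ (v · t)| := by
  have hrow : √(#J : ℝ) * a ≤ ∑ t ∈ P, √(∑ j ∈ J, v j t ^ 2) := by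
    rcases (#J).eq_zero_or_pos with h0 | hpos
    · rw [h0, Nat.cast_zero, Real.sqrt_zero, zero_mul]
      exact sum_nonneg fun t _ => Real.sqrt_nonneg _
    have hcs (t : ι) : ∑ j ∈ J, |v j t| ≤ √(#J : ℝ) * √(∑ j ∈ J, v j t ^ 2) := by
      simpa using Real.sum_mul_le_sqrt_mul_sqrt J (fun _ => 1) (fun j => |v j t|)
    refine le_of_mul_le_mul_left ?_ (Real.sqrt_pos.2 (Nat.cast_pos.2 hpos))
    calc √(#J : ℝ) * (√(#J : ℝ) * a) = (#J : ℝ) * a := by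
          rw [← mul_assoc, Real.mul_self_sqrt (Nat.cast_nonneg _)]
      _ = ∑ j ∈ J, a := by rw [sum_const, nsmul_eq_mul]
      _ ≤ ∑ t ∈ P, ∑ j ∈ J, |v j t| := (sum_le_sum hv).trans_eq sum_comm
      _ ≤ √(#J : ℝ) * ∑ t ∈ P, √(∑ j ∈ J, v j t ^ 2) := by
          rw [mul_sum]
          exact sum_le_sum fun t _ => hcs t
  refine exists_le_of_sum_le ⟨∅, empty_mem_powerset J⟩ ?_
  calc ∑ _ξ ∈ J.powerset, √(#J : ℝ) * a = 2 ^ #J * (√(#J : ℝ) * a) := by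
        rw [sum_const, card_powerset, nsmul_eq_mul, Nat.cast_pow, Nat.cast_ofNat]
    _ ≤ ∑ t ∈ P, 2 ^ #J * √(∑ j ∈ J, v j t ^ 2) := by
        rw [← mul_sum]; exact mul_le_mul_of_nonneg_left hrow (by positivity)
    _ ≤ ∑ t ∈ P, √3 * ∑ ξ ∈ J.powerset, |rademacherSum J ξ (v · t)| :=
        sum_le_sum fun t _ => khintchine J (v · t)
    _ = ∑ ξ ∈ J.powerset, √3 * ∑ t ∈ P, |rademacherSum J ξ (v · t)| := by
        simp only [← mul_sum]; rw [sum_comm]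

end Khintchine

lemma sum_abs_le_two_mul_of_forall_subset {ι : Type*} (P : Finset ι) (w : ι → ℝ) {C : ℝ}
    (hC : ∀ G ⊆ P, |∑ t ∈ G, w t| ≤ C) : ∑ t ∈ P, |w t| ≤ 2 * C := by
  rw [← sum_filter_add_sum_filter_not P (0 ≤ w ·)]
  have hpos : ∑ t ∈ P with 0 ≤ w t, |w t| = ∑ t ∈ P with 0 ≤ w t, w t :=
    sum_congr rfl fun t ht => abs_of_nonneg (mem_filter.1 ht).2
  have hneg : ∑ t ∈ P with ¬0 ≤ w t, |w t| = -∑ t ∈ P with ¬0 ≤ w t, w t := by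
    rw [← sum_neg_distrib]
    exact sum_congr rfl fun t ht => abs_of_neg (not_le.1 (mem_filter.1 ht).2)
  rw [hpos, hneg, two_mul]
  exact add_le_add (le_abs_self _ |>.trans (hC _ (filter_subset _ _)))
    (neg_le_abs _ |>.trans (hC _ (filter_subset _ _)))

/-- Khintchine gives signs for which `w t = ∑ j ∈ J, ±v j t` has `∑ t ∈ P, |w t| ≥ √(#J / 3) * a`,
while `hC` gives `∑ t ∈ P, |w t| ≤ 2 * C`. -/
theorem sqrt_card_mul_le_of_forall_subset {ι κ : Type*} [DecidableEq κ] (J : Finset κ)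
    (P : Finset ι) (v : κ → ι → ℝ) {a C : ℝ} (hv : ∀ j ∈ J, a ≤ ∑ t ∈ P, |v j t|)
    (hC : ∀ G ⊆ P, ∑ j ∈ J, |∑ t ∈ G, v j t| ≤ C) :
    √(#J : ℝ) * a ≤ 2 * √3 * C := by
  obtain ⟨ξ, -, hξ⟩ := exists_sqrt_card_mul_le_sum_abs_rademacherSum J P v hv
  have hw : ∀ G ⊆ P, |∑ t ∈ G, rademacherSum J ξ (v · t)| ≤ C := fun G hG => by
    rw [sum_rademacherSum]
    exact (abs_rademacherSum_le _ _ _).trans (hC G hG)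
  calc √(#J : ℝ) * a ≤ √3 * ∑ t ∈ P, |rademacherSum J ξ (v · t)| := hξ
    _ ≤ √3 * (2 * C) :=
        mul_le_mul_of_nonneg_left (sum_abs_le_two_mul_of_forall_subset P _ hw) (Real.sqrt_nonneg 3)
    _ = 2 * √3 * C := by ring

section FinitelyAdditive

variable {α : Type*}

lemma apply_preimage_finset_eq_sum {β : Type*} [DecidableEq β] (μ : Set α → ℝ)
    (hμ : ∀ s t, Disjoint s t → μ (s ∪ t) = μ s + μ t) (f : α → β) (G : Finset β) :
    μ (f ⁻¹' G) = ∑ t ∈ G, μ (f ⁻¹' {t}) := by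
  induction G using Finset.induction_on with
  | empty =>
    have h := hμ ∅ ∅ (Set.disjoint_empty _)
    rw [Set.union_empty] at h
    simp only [coe_empty, Set.preimage_empty, sum_empty]
    linarith
  | @insert t G ht ih =>
    rw [sum_insert ht, ← ih, coe_insert, Set.insert_eq, Set.preimage_union]
    exact hμ _ _ ((Set.disjoint_singleton_left.2 ht).preimage f)

theorem sqrt_mul_le_of_finitelyAdditive (m : ℕ) (μ : ℕ → Set α → ℝ)
    (hμ : ∀ j s t, Disjoint s t → μ j (s ∪ t) = μ j s + μ j t) (A : ℕ → Set α) {a C : ℝ}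
    (hA : ∀ j < m, a ≤ μ j (A j)) (hC : ∀ s, ∑ j ∈ range m, |μ j s| ≤ C) :
    √(m : ℝ) * a ≤ 2 * √3 * C := by
  classical
  -- the fibres of `pattern` are the atoms of the Boolean algebra generated by the `A j`, `j < m`
  let pattern (i : α) : Finset ℕ := {j ∈ range m | i ∈ A j}
  have hμ' (j : ℕ) (G : Finset (Finset ℕ)) :=
    apply_preimage_finset_eq_sum (μ j) (hμ j) pattern G
  have hv (j : ℕ) (hj : j ∈ range m) :
      a ≤ ∑ t ∈ (range m).powerset, |μ j (pattern ⁻¹' {t})| := by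
    have hAj : A j = pattern ⁻¹' ↑({t ∈ (range m).powerset | j ∈ t}) := by
      ext i
      simp [pattern, mem_range.1 hj]
    calc a ≤ μ j (A j) := hA j (mem_range.1 hj)
      _ = ∑ t ∈ (range m).powerset with j ∈ t, μ j (pattern ⁻¹' {t}) := by rw [hAj, hμ']
      _ ≤ ∑ t ∈ (range m).powerset, |μ j (pattern ⁻¹' {t})| :=
          (sum_le_sum fun _ _ => le_abs_self _).trans
            (sum_le_sum_of_subset_of_nonneg (filter_subset _ _) fun _ _ _ => abs_nonneg _)
  simpa using sqrt_card_mul_le_of_forall_subset (range m) (range m).powerset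
    (fun j t => μ j (pattern ⁻¹' {t})) hv (fun G _ => by simpa only [← hμ'] using hC _)

end FinitelyAdditive

section Truncation

noncomputable def truncCLM (N : ℕ) : ℓ¹(ℕ, ℝ) →L[ℝ] ℓ¹(ℕ, ℝ) :=
  ∑ i ∈ range N, (lp.singleContinuousLinearMap ℝ (fun _ => ℝ) 1 i).comp (lp.evalCLM ℝ _ 1 i)

lemma truncCLM_apply (N : ℕ) (y : ℓ¹(ℕ, ℝ)) :
    truncCLM N y = ∑ i ∈ range N, lp.single 1 i (y i) := by
  simp [truncCLM, lp.evalCLM]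

lemma isCompactOperator_truncCLM (N : ℕ) : IsCompactOperator (truncCLM N) :=
  (compactOperator (RingHom.id ℝ) _ _).sum_mem fun i _ =>
    (isCompactOperator_of_locallyCompactSpace_dom (lp.evalCLM ℝ (fun _ : ℕ => ℝ) 1 i)).clm_comp
      (lp.singleContinuousLinearMap ℝ (fun _ => ℝ) 1 i)

lemma norm_sub_truncCLM (N : ℕ) (y : ℓ¹(ℕ, ℝ)) :
    ‖y - truncCLM N y‖ = ‖y‖ - ∑ i ∈ range N, |y i| := by
  simpa [truncCLM_apply] using lp.norm_compl_sum_single (p := 1) (by simp) y (range N)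

lemma norm_sub_truncCLM_sub_norm_sub_truncCLM {N M : ℕ} (h : N ≤ M) (y : ℓ¹(ℕ, ℝ)) :
    ‖y - truncCLM N y‖ - ‖y - truncCLM M y‖ = ∑ i ∈ Ico N M, |y i| := by
  rw [norm_sub_truncCLM, norm_sub_truncCLM, ← sum_range_add_sum_Ico _ h]
  ring

lemma sum_abs_le_norm (s : Finset ℕ) (y : ℓ¹(ℕ, ℝ)) : ∑ i ∈ s, |y i| ≤ ‖y‖ := by
  simpa using lp.sum_rpow_le_norm_rpow (p := 1) (by simp) y s

lemma norm_sub_truncCLM_le (N : ℕ) (y : ℓ¹(ℕ, ℝ)) : ‖y - truncCLM N y‖ ≤ ‖y‖ := by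
  rw [norm_sub_truncCLM]
  exact sub_le_self _ (sum_nonneg fun _ _ => abs_nonneg _)

lemma antitone_norm_sub_truncCLM (y : ℓ¹(ℕ, ℝ)) : Antitone fun N => ‖y - truncCLM N y‖ :=
  fun _ _ h => sub_nonneg.1 <| (norm_sub_truncCLM_sub_norm_sub_truncCLM h y).symm ▸
    sum_nonneg fun _ _ => abs_nonneg _

lemma tendsto_norm_sub_truncCLM (y : ℓ¹(ℕ, ℝ)) :
    Tendsto (fun N => ‖y - truncCLM N y‖) atTop (𝓝 0) := by
  have h := (lp.hasSum_norm (p := 1) (by simp) y).tendsto_sum_nat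
  simp only [ENNReal.toReal_one, Real.rpow_one, Real.norm_eq_abs] at h
  simpa [norm_sub_truncCLM] using (tendsto_const_nhds (x := ‖y‖)).sub h

/-- `T` is the operator-norm limit of the finite-rank operators `truncCLM N ∘L T`. -/
theorem isCompactOperator_of_forall_norm_sub_truncCLM_le {E : Type*} [NormedAddCommGroup E]
    [NormedSpace ℝ E] (T : E →L[ℝ] ℓ¹(ℕ, ℝ))
    (h : ∀ ε > 0, ∃ N, ∀ x, ‖x‖ ≤ 1 → ‖T x - truncCLM N (T x)‖ ≤ ε) : IsCompactOperator T := by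
  refine isCompactOperator_of_tendsto (l := atTop) (F := fun N => truncCLM N ∘L T) ?_
    (Eventually.of_forall fun N => (isCompactOperator_truncCLM N).comp_clm T)
  refine Metric.tendsto_atTop.2 fun ε hε => ?_
  obtain ⟨N, hN⟩ := h (ε / 2) (half_pos hε)
  refine ⟨N, fun n hn => ?_⟩
  rw [dist_eq_norm']
  refine (ContinuousLinearMap.opNorm_le_of_unit_norm (half_pos hε).le fun x hx => ?_).trans_lt
    (half_lt_self hε)
  exact (antitone_norm_sub_truncCLM (T x) hn).trans (hN x hx.le)

end Truncation

section Indicator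

variable {α : Type*}

noncomputable def indicatorLinfty (B : Set α) : ℓ^∞(α, ℝ) :=
  ⟨B.indicator 1, memℓp_infty_iff.2 ⟨1, by
    rintro _ ⟨i, rfl⟩
    by_cases h : i ∈ B <;> simp [h]⟩⟩

lemma coe_indicatorLinfty (B : Set α) : ⇑(indicatorLinfty B) = B.indicator 1 := rfl

lemma norm_indicatorLinfty_le (B : Set α) : ‖indicatorLinfty B‖ ≤ 1 :=
  lp.norm_le_of_forall_le zero_le_one fun i => by
    by_cases h : i ∈ B <;> simp [coe_indicatorLinfty, h]

lemma indicatorLinfty_union {A B : Set α} (h : Disjoint A B) :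
    indicatorLinfty (A ∪ B) = indicatorLinfty A + indicatorLinfty B :=
  lp.ext (Set.indicator_union_of_disjoint h 1)

lemma sum_smul_indicatorLinfty_preimage_apply {L : ℕ} (f : α → ℕ) (hf : ∀ i, f i < L)
    (c : ℕ → ℝ) (i : α) :
    (∑ r ∈ range L, c r • indicatorLinfty (f ⁻¹' {r})) i = c (f i) := by
  rw [lp.coeFn_sum, Finset.sum_apply, sum_eq_single_of_mem (f i) (mem_range.2 (hf i))]
  · simp [coe_indicatorLinfty]
  · intro r _ hr
    simp [coe_indicatorLinfty, Ne.symm hr]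

/-- `x` is within `1 / n` of the step function `∑ r ≤ 2n, (r / n - 1) χ_{level = r}`, where
`level i = ⌊(x i + 1) n⌋`. -/
lemma norm_apply_le_of_forall_indicatorLinfty {F : Type*} [NormedAddCommGroup F]
    [NormedSpace ℝ F] (S : ℓ^∞(α, ℝ) →L[ℝ] F) {η : ℝ} (hS : ∀ B, ‖S (indicatorLinfty B)‖ ≤ η)
    {n : ℕ} (hn : n ≠ 0) {x : ℓ^∞(α, ℝ)} (hx : ‖x‖ ≤ 1) :
    ‖S x‖ ≤ (2 * n + 1) * η + ‖S‖ / n := by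
  have hn' : (0 : ℝ) < n := Nat.cast_pos.2 (Nat.pos_of_ne_zero hn)
  have hxi (i : α) : |x i| ≤ 1 := (lp.norm_apply_le_norm ENNReal.top_ne_zero x i).trans hx
  let level (i : α) : ℕ := ⌊(x i + 1) * n⌋₊
  let c (r : ℕ) : ℝ := r / n - 1
  have hlevel (i : α) : level i < 2 * n + 1 := by
    refine Nat.lt_succ_of_le (Nat.floor_le_of_le ?_)
    push_cast
    nlinarith [(abs_le.1 (hxi i)).2]
  have hc (r : ℕ) (hr : r ∈ range (2 * n + 1)) : |c r| ≤ 1 := by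
    have hr' : (r : ℝ) ≤ 2 * n := by exact_mod_cast Nat.lt_succ_iff.1 (mem_range.1 hr)
    rw [abs_le]
    constructor
    · have : 0 ≤ (r : ℝ) / n := by positivity
      linarith
    · linarith [(div_le_iff₀ hn').2 hr']
  set x' := ∑ r ∈ range (2 * n + 1), c r • indicatorLinfty (level ⁻¹' {r})
  have hdist : ‖x - x'‖ ≤ 1 / n := by
    refine lp.norm_le_of_forall_le (by positivity) fun i => ?_
    rw [lp.coeFn_sub, Pi.sub_apply, sum_smul_indicatorLinfty_preimage_apply level hlevel,
      Real.norm_eq_abs]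
    have h0 : 0 ≤ (x i + 1) * n := mul_nonneg (by linarith [(abs_le.1 (hxi i)).1]) hn'.le
    have h₁ := Nat.floor_le h0
    have h₂ := Nat.lt_floor_add_one ((x i + 1) * n)
    have h : x i - c (level i) = ((x i + 1) * n - level i) / n := by
      simp only [c]; field_simp; ring
    rw [h, abs_div, abs_of_pos hn']
    exact div_le_div_of_nonneg_right (abs_le.2 ⟨by linarith, by linarith⟩) hn'.le
  calc ‖S x‖ = ‖S x' + S (x - x')‖ := by rw [← map_add, add_sub_cancel]
    _ ≤ ∑ r ∈ range (2 * n + 1), |c r| * η + ‖S‖ * (1 / n) := by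
        refine norm_add_le_of_le
          ((map_sum S _ _ ▸ norm_sum_le _ _).trans (sum_le_sum fun r _ => ?_))
          ((S.le_opNorm _).trans (mul_le_mul_of_nonneg_left hdist (norm_nonneg S)))
        rw [map_smul, norm_smul, Real.norm_eq_abs]
        exact mul_le_mul_of_nonneg_left (hS _) (abs_nonneg _)
    _ ≤ (2 * n + 1) * η + ‖S‖ / n := by
        have hη : 0 ≤ η := (norm_nonneg _).trans (hS ∅)
        refine add_le_add ((sum_le_sum fun r hr => mul_le_of_le_one_left hη (hc r hr)).trans ?_)
          (mul_one_div _ _).le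
        simp

end Indicator

lemma sum_range_sum_Ico_of_monotone {M : Type*} [AddCommMonoid M] {f : ℕ → ℕ} (hf : Monotone f)
    (g : ℕ → M) (m : ℕ) :
    ∑ j ∈ range m, ∑ k ∈ Ico (f j) (f (j + 1)), g k = ∑ k ∈ Ico (f 0) (f m), g k := by
  induction m with
  | zero => simp
  | succ m ih =>
    rw [sum_range_succ, ih, sum_Ico_consecutive _ (hf (Nat.zero_le m)) (hf m.le_succ)]

section UniformTails

variable {α : Type*} (T : ℓ^∞(α, ℝ) →L[ℝ] ℓ¹(ℕ, ℝ))

lemma exists_strictMono_le_sum_Ico {ε : ℝ} (hε : 0 < ε)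
    (h : ∀ N, ∃ B, ε < ‖T (indicatorLinfty B) - truncCLM N (T (indicatorLinfty B))‖) :
    ∃ (Ns : ℕ → ℕ) (A : ℕ → Set α), StrictMono Ns ∧
      ∀ j, ε / 2 ≤ ∑ k ∈ Ico (Ns j) (Ns (j + 1)), |T (indicatorLinfty (A j)) k| := by
  have step (N : ℕ) : ∃ M, N < M ∧ ∃ B,
      ε / 2 ≤ ∑ k ∈ Ico N M, |T (indicatorLinfty B) k| := by
    obtain ⟨B, hB⟩ := h N
    set y := T (indicatorLinfty B)
    obtain ⟨M₀, hM₀⟩ := eventually_atTop.1 <|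
      (tendsto_norm_sub_truncCLM y).eventually (gt_mem_nhds (half_pos hε))
    have hNM : N ≤ max (N + 1) M₀ := (Nat.le_succ N).trans (le_max_left _ _)
    refine ⟨max (N + 1) M₀, Nat.lt_of_succ_le (le_max_left _ _), B, ?_⟩
    rw [← norm_sub_truncCLM_sub_norm_sub_truncCLM hNM]
    linarith [hM₀ _ (le_max_right (N + 1) M₀)]
  choose next hnext B hB using step
  refine ⟨fun j => next^[j] 0, fun j => B (next^[j] 0),
    strictMono_nat_of_lt_succ fun j => ?_, fun j => ?_⟩
  · rw [Function.iterate_succ_apply']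
    exact hnext _
  · simp only [Function.iterate_succ_apply']
    exact hB _

lemma sqrt_mul_le_of_le_sum_Ico {Ns : ℕ → ℕ} (hNs : Monotone Ns) (A : ℕ → Set α) {a : ℝ}
    (hA : ∀ j, a ≤ ∑ k ∈ Ico (Ns j) (Ns (j + 1)), |T (indicatorLinfty (A j)) k|) (m : ℕ) :
    √(m : ℝ) * a ≤ 2 * √3 * ‖T‖ := by
  let block (j : ℕ) := Ico (Ns j) (Ns (j + 1))
  -- the `j`-th functional reads `T χ_s` on the `j`-th block, against the signs of `T χ_{A j}`
  refine sqrt_mul_le_of_finitelyAdditive m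
    (fun j s => rademacherSum (block j) {k ∈ block j | 0 ≤ T (indicatorLinfty (A j)) k}
      (T (indicatorLinfty s))) (fun j s t hst => ?_) A (fun j _ => ?_) fun s => ?_
  · rw [indicatorLinfty_union hst, map_add, lp.coeFn_add, rademacherSum_add]
  · rw [rademacherSum_filter_nonneg]
    exact hA j
  · calc _ ≤ ∑ j ∈ range m, ∑ k ∈ block j, |T (indicatorLinfty s) k| :=
          sum_le_sum fun j _ => abs_rademacherSum_le _ _ _
      _ = ∑ k ∈ Ico (Ns 0) (Ns m), |T (indicatorLinfty s) k| :=
          sum_range_sum_Ico_of_monotone hNs _ m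
      _ ≤ ‖T (indicatorLinfty s)‖ := sum_abs_le_norm _ _
      _ ≤ ‖T‖ := (T.le_opNorm_of_le (norm_indicatorLinfty_le s)).trans_eq (mul_one _)

theorem exists_forall_norm_sub_truncCLM_indicatorLinfty_le {ε : ℝ} (hε : 0 < ε) :
    ∃ N, ∀ B : Set α,
      ‖T (indicatorLinfty B) - truncCLM N (T (indicatorLinfty B))‖ ≤ ε := by
  by_contra! h
  obtain ⟨Ns, A, hNs, hA⟩ := exists_strictMono_le_sum_Ico T hε h
  obtain ⟨m, hm⟩ := exists_nat_gt ((4 * √3 * ‖T‖ / ε) ^ 2)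
  have hm' : 4 * √3 * ‖T‖ < √(m : ℝ) * ε :=
    (div_lt_iff₀ hε).1 ((Real.lt_sqrt (by positivity)).2 hm)
  linarith [sqrt_mul_le_of_le_sum_Ico T hNs.monotone A hA m]

theorem exists_forall_norm_sub_truncCLM_le {ε : ℝ} (hε : 0 < ε) :
    ∃ N, ∀ x, ‖x‖ ≤ 1 → ‖T x - truncCLM N (T x)‖ ≤ ε := by
  obtain ⟨n, hn⟩ := exists_nat_gt (2 * ‖T‖ / ε)
  have hn₀ : (0 : ℝ) < n := (by positivity : 0 ≤ 2 * ‖T‖ / ε).trans_lt hn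
  obtain ⟨N, hN⟩ := exists_forall_norm_sub_truncCLM_indicatorLinfty_le T
    (ε := ε / (2 * (2 * n + 1))) (by positivity)
  let S := T - (truncCLM N).comp T
  have hS : ‖S‖ ≤ ‖T‖ := S.opNorm_le_bound (norm_nonneg T) fun x =>
    (norm_sub_truncCLM_le N (T x)).trans (T.le_opNorm x)
  refine ⟨N, fun x hx =>
    (norm_apply_le_of_forall_indicatorLinfty S hN (Nat.cast_pos.1 hn₀).ne' hx).trans ?_⟩
  have h₁ : (2 * n + 1) * (ε / (2 * (2 * n + 1))) = ε / 2 := by field_simp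
  have h₂ : ‖S‖ / n ≤ ε / 2 := by
    rw [div_le_iff₀ hn₀]
    rw [div_lt_iff₀ hε] at hn
    linarith
  linarith

end UniformTails

/-- Every bounded linear map from ℓ∞ to ℓ¹ is compact. -/
theorem isCompactOperator_of_linfty_to_l1
    (T : lp (fun _ : ℕ => ℝ) ⊤ →L[ℝ] lp (fun _ : ℕ => ℝ) 1) :
    IsCompactOperator T :=
  isCompactOperator_of_forall_norm_sub_truncCLM_le T fun _ => exists_forall_norm_sub_truncCLM_le T
end

section
/- If Z is a Banach space containing no subspace isomorphic to ℓ¹, then every bounded linear map T : Z → ℓ¹ is compact. -/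
/-!
If `T` is not compact, the image of the unit ball contains an `ε`-separated sequence `T xⱼ`.
Passing to a coordinatewise convergent subsequence and taking consecutive differences gives
vectors `zⱼ` of norm at most `2` with `ε ≤ ‖T zⱼ‖` and `T zⱼ → 0` coordinatewise. A gliding hump
argument then extracts a subsequence whose images carry all but `ε / 4` of their mass on disjoint
consecutive blocks of coordinates. Testing against the functional that has the sign of `aᵢ` times
the sign of the coordinate on the `i`-th block shows `‖∑ aᵢ T zₙᵢ‖ ≥ (ε / 2) ‖a‖`, so
`a ↦ ∑ aᵢ zₙᵢ` embeds `ℓ¹` isomorphically into `Z`.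
-/

open Filter Topology
open scoped lp ENNReal NNReal

theorem Metric.exists_separated_seq_of_not_totallyBounded {X : Type*} [PseudoMetricSpace X]
    {s : Set X} (hs : ¬TotallyBounded s) :
    ∃ ε > 0, ∃ u : ℕ → X, (∀ n, u n ∈ s) ∧ ∀ m n, m < n → ε ≤ dist (u m) (u n) := by
  simp only [Metric.totallyBounded_iff, not_forall, not_exists, not_and, exists_prop] at hs
  obtain ⟨ε, hε, hcover⟩ := hs
  obtain ⟨u, hu⟩ := Set.seq_of_forall_finite_exists
    (P := fun x t => x ∈ s ∧ ∀ y ∈ t, ε ≤ dist y x) fun t ht => by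
      obtain ⟨x, hxs, hx⟩ := Set.not_subset.1 (hcover t ht)
      simp only [Set.mem_iUnion, Metric.mem_ball, not_exists, not_lt] at hx
      exact ⟨x, hxs, fun y hy => (hx y hy).trans_eq (dist_comm x y)⟩
  exact ⟨ε, hε, u, fun n => (hu n).1, fun m n hmn => (hu n).2 _ ⟨m, hmn, rfl⟩⟩

theorem StrictMono.findGreatest_le_eq {m : ℕ → ℕ} (hm : StrictMono m) {i k : ℕ}
    (hk : k ∈ Finset.Ico (m i) (m (i + 1))) : Nat.findGreatest (fun j => m j ≤ k) k = i := by
  obtain ⟨hik, hki⟩ := Finset.mem_Ico.1 hk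
  refine Nat.findGreatest_eq_iff.2 ⟨(hm.id_le i).trans hik, fun _ => hik, fun n hin _ hnk => ?_⟩
  exact absurd (hm.monotone (show i + 1 ≤ n from hin)) (by omega)

theorem ContinuousLinearMap.norm_flip_lsmul_le {𝕜 E : Type*} [RCLike 𝕜] [NormedAddCommGroup E]
    [NormedSpace 𝕜 E] : ‖(lsmul 𝕜 𝕜 : 𝕜 →L[𝕜] E →L[𝕜] E).flip‖ ≤ (1 : ℝ≥0) := by
  simpa [opNorm_flip] using opNorm_lsmul_le

namespace lp

theorem hasSum_norm_of_one {ι E : Type*} [NormedAddCommGroup E] (a : ℓ¹(ι, E)) :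
    HasSum (fun i => ‖a i‖) ‖a‖ := by
  simpa using lp.hasSum_norm (p := 1) (by simp) a

theorem exists_subseq_tendsto_apply {ι E : Type*} [Countable ι] [NormedAddCommGroup E]
    [ProperSpace E] {p : ℝ≥0∞} (hp : p ≠ 0) {w : ℕ → ℓ^p(ι, E)} {C : ℝ}
    (hw : ∀ j, ‖w j‖ ≤ C) :
    ∃ L : ι → E, ∃ φ : ℕ → ℕ, StrictMono φ ∧
      ∀ k, Tendsto (fun j => w (φ j) k) atTop (𝓝 (L k)) := by
  have hK : IsCompact (Set.univ.pi fun _ : ι => Metric.closedBall (0 : E) C) :=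
    isCompact_univ_pi fun _ => isCompact_closedBall 0 C
  obtain ⟨L, -, φ, hφ, hL⟩ := hK.tendsto_subseq (x := fun j k => w j k) fun j k _ =>
    mem_closedBall_zero_iff.2 ((norm_apply_le_norm hp (w j) k).trans (hw j))
  exact ⟨L, φ, hφ, tendsto_pi_nhds.1 hL⟩

section GlidingHump

variable {E : Type*} [NormedAddCommGroup E] {d : ℕ → ℓ¹(ℕ, E)} {δ : ℝ}

theorem exists_concentrated_on_Ico (hd : ∀ k, Tendsto (fun j => d j k) atTop (𝓝 0))
    (hδ : 0 < δ) (N M : ℕ) :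
    ∃ j > N, ∃ M' > M, ‖d j‖ ≤ ∑ k ∈ Finset.Ico M M', ‖d j k‖ + δ := by
  have hhead : ∀ᶠ j in atTop, ∑ k ∈ Finset.range M, ‖d j k‖ < δ / 2 := by
    refine Tendsto.eventually_lt_const (half_pos hδ) ?_
    simpa using tendsto_finsetSum (Finset.range M) fun k _ => (hd k).norm
  obtain ⟨j, hjN, hj⟩ := ((eventually_gt_atTop N).and hhead).exists
  have htail : ∀ᶠ M' in atTop, ‖d j‖ - δ / 2 < ∑ k ∈ Finset.range M', ‖d j k‖ :=
    (hasSum_norm_of_one (d j)).tendsto_sum_nat.eventually_const_lt (by linarith)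
  obtain ⟨M', hM'M, hM'⟩ := ((eventually_gt_atTop M).and htail).exists
  refine ⟨j, hjN, M', hM'M, ?_⟩
  rw [← Finset.sum_range_add_sum_Ico _ hM'M.le] at hM'
  linarith

theorem exists_gliding_hump (hd : ∀ k, Tendsto (fun j => d j k) atTop (𝓝 0)) (hδ : 0 < δ) :
    ∃ n m : ℕ → ℕ, StrictMono n ∧ StrictMono m ∧
      ∀ i, ‖d (n i)‖ ≤ ∑ k ∈ Finset.Ico (m i) (m (i + 1)), ‖d (n i) k‖ + δ := by
  choose j hj M' hM' hconc using exists_concentrated_on_Ico hd hδ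
  set F : ℕ → ℕ × ℕ := fun i => (fun q : ℕ × ℕ => (j q.1 q.2, M' q.1 q.2))^[i] (0, 0)
  have hF : ∀ i, F (i + 1) = (j (F i).1 (F i).2, M' (F i).1 (F i).2) := fun i =>
    Function.iterate_succ_apply' _ _ _
  refine ⟨fun i => (F (i + 1)).1, fun i => (F i).2, strictMono_nat_of_lt_succ fun i => ?_,
    strictMono_nat_of_lt_succ fun i => ?_, fun i => ?_⟩
  · rw [hF (i + 1)]; exact hj _ _
  · rw [hF i]; exact hM' _ _
  · simp only [hF i]; exact hconc _ _

end GlidingHump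

section Synthesis

variable {ι 𝕜 E : Type*} [RCLike 𝕜] [NormedAddCommGroup E] [NormedSpace 𝕜 E] [CompleteSpace E]

/-- `a ↦ ∑' i, a i • z i`, see `hasSum_synthesis`. -/
noncomputable def synthesis (z : ℓ^∞(ι, E)) : ℓ¹(ι, 𝕜) →L[𝕜] E :=
  dualPairing ∞ 1 (fun _ => (ContinuousLinearMap.lsmul 𝕜 𝕜).flip)
    (fun _ => ContinuousLinearMap.norm_flip_lsmul_le) z

theorem norm_synthesis_le (z : ℓ^∞(ι, E)) : ‖synthesis (𝕜 := 𝕜) z‖ ≤ ‖z‖ := by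
  have h := norm_dualPairing (ι := ι) (H := E) (p := ∞) (q := 1) _
    fun _ => ContinuousLinearMap.norm_flip_lsmul_le (𝕜 := 𝕜)
  calc ‖synthesis (𝕜 := 𝕜) z‖ ≤ ((1 : ℝ≥0) : ℝ) * ‖z‖ :=
        ContinuousLinearMap.le_of_opNorm_le _ h z
    _ = ‖z‖ := by rw [NNReal.coe_one, one_mul]

theorem hasSum_synthesis (z : ℓ^∞(ι, E)) (a : ℓ¹(ι, 𝕜)) :
    HasSum (fun i => a i • z i) (synthesis z a) := by
  refine Summable.hasSum (.of_norm_bounded (g := fun i => ‖a i‖ * ‖z‖)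
    ((hasSum_norm_of_one a).summable.mul_right _) fun i => ?_)
  rw [norm_smul]
  exact mul_le_mul_of_nonneg_left (norm_apply_le_norm ENNReal.top_ne_zero z i) (norm_nonneg _)

theorem map_synthesis {F : Type*} [NormedAddCommGroup F] [NormedSpace 𝕜 F] [CompleteSpace F]
    (T : E →L[𝕜] F) (z : ℓ^∞(ι, E)) (a : ℓ¹(ι, 𝕜)) :
    T (synthesis z a) =
      synthesis (mapCLM ∞ (fun _ => T) (norm_nonneg T) (fun _ => le_rfl) z) a := by
  refine ((hasSum_synthesis z a).mapL T).unique ?_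
  simpa using hasSum_synthesis (mapCLM ∞ (fun _ => T) (norm_nonneg T) (fun _ => le_rfl) z) a

theorem norm_synthesis_sub_sum_le (z : ℓ^∞(ι, E)) (a : ℓ¹(ι, 𝕜)) (s : Finset ι) :
    ‖synthesis z a - ∑ i ∈ s, a i • z i‖ ≤ ‖z‖ * (‖a‖ - ∑ i ∈ s, ‖a i‖) := by
  have hz : HasSum (fun i : ((s : Set ι)ᶜ : Set ι) => a i • z i)
      (synthesis z a - ∑ i ∈ s, a i • z i) :=
    (s.hasSum_compl_iff (f := fun i => a i • z i)).2 (by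
      rw [sub_add_cancel]; exact hasSum_synthesis z a)
  have ha : HasSum (fun i : ((s : Set ι)ᶜ : Set ι) => ‖z‖ * ‖a i‖)
      (‖z‖ * (‖a‖ - ∑ i ∈ s, ‖a i‖)) :=
    ((s.hasSum_compl_iff (f := fun i => ‖a i‖)).2 (by
      rw [sub_add_cancel]; exact hasSum_norm_of_one a)).mul_left _
  refine hz.norm_le_of_bounded ha fun i => ?_
  rw [norm_smul, mul_comm]
  exact mul_le_mul_of_nonneg_right (norm_apply_le_norm ENNReal.top_ne_zero z i) (norm_nonneg _)

end Synthesis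

theorem le_mul_synthesis_of_eq_sign {ι : Type*} (u : ℓ^∞(ι, ℝ)) (hu : ‖u‖ ≤ 1) (g : ℓ¹(ι, ℝ))
    (s : Finset ι) (t : ℝ) (hs : ∀ k ∈ s, u k = SignType.sign (t * g k)) :
    |t| * (2 * ∑ k ∈ s, ‖g k‖ - ‖g‖) ≤ t * synthesis u g := by
  set B := ∑ k ∈ s, ‖g k‖
  have hsum : ∑ k ∈ s, g k • u k = SignType.sign t * B := by
    rw [Finset.mul_sum]
    refine Finset.sum_congr rfl fun k hk => ?_
    rw [hs k hk, sign_mul, SignType.coe_mul, smul_eq_mul, Real.norm_eq_abs, ← self_mul_sign (g k)]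
    ring
  have hrest : |synthesis u g - SignType.sign t * B| ≤ ‖g‖ - B := by
    have h := norm_synthesis_sub_sum_le u g s
    rw [hsum, Real.norm_eq_abs] at h
    exact h.trans (mul_le_of_le_one_left
      (sub_nonneg.2 (sum_le_hasSum s (fun _ _ => norm_nonneg _) (hasSum_norm_of_one g))) hu)
  have hsplit : t * synthesis u g = t * (synthesis u g - SignType.sign t * B) + |t| * B := by
    rw [← self_mul_sign t]
    ring
  have hlow : -(|t| * (‖g‖ - B)) ≤ t * (synthesis u g - SignType.sign t * B) := by
    refine neg_le_of_abs_le ?_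
    rw [abs_mul]
    exact mul_le_mul_of_nonneg_left hrest (abs_nonneg t)
  linarith

theorem le_norm_synthesis_of_blocks (c : ℓ^∞(ℕ, ℓ¹(ℕ, ℝ))) {m : ℕ → ℕ} (hm : StrictMono m)
    {ε δ : ℝ} (hc : ∀ i, ε ≤ ‖c i‖)
    (hblock : ∀ i, ‖c i‖ ≤ ∑ k ∈ Finset.Ico (m i) (m (i + 1)), ‖c i k‖ + δ) (a : ℓ¹(ℕ, ℝ)) :
    (ε - 2 * δ) * ‖a‖ ≤ ‖synthesis c a‖ := by
  set block : ℕ → ℕ := fun k => Nat.findGreatest (fun j => m j ≤ k) k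
  have hsign : ∀ k, ‖(SignType.sign (a (block k) * c (block k) k) : ℝ)‖ ≤ 1 := fun k => by
    cases SignType.sign (a (block k) * c (block k) k) <;> simp
  let u : ℓ^∞(ℕ, ℝ) := ⟨_, memℓp_infty ⟨1, Set.forall_mem_range.2 hsign⟩⟩
  have hu : ‖u‖ ≤ 1 := norm_le_of_forall_le zero_le_one hsign
  have hS : ∀ x : ℓ¹(ℕ, ℝ), synthesis u x ≤ ‖x‖ := fun x => by
    have h := (synthesis (𝕜 := ℝ) u).le_opNorm x
    exact (Real.le_norm_self _).trans
      (h.trans (mul_le_of_le_one_left (norm_nonneg x) ((norm_synthesis_le u).trans hu)))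
  have hi : ∀ i, ‖a i‖ * (ε - 2 * δ) ≤ synthesis u (a i • c i) := fun i => by
    rw [map_smul, smul_eq_mul, Real.norm_eq_abs]
    refine (mul_le_mul_of_nonneg_left (by linarith [hc i, hblock i]) (abs_nonneg _)).trans
      (le_mul_synthesis_of_eq_sign u hu (c i) _ (a i) fun k hk => ?_)
    simp [u, block, hm.findGreatest_le_eq hk]
  calc (ε - 2 * δ) * ‖a‖ ≤ synthesis u (synthesis c a) := by
        rw [mul_comm]
        exact hasSum_le hi ((hasSum_norm_of_one a).mul_right _) ((hasSum_synthesis c a).mapL _)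
    _ ≤ ‖synthesis c a‖ := hS _

end lp

theorem exists_l1_embedding_of_tendsto_apply {Z : Type*} [NormedAddCommGroup Z] [NormedSpace ℝ Z]
    [CompleteSpace Z] (T : Z →L[ℝ] ℓ¹(ℕ, ℝ)) {z : ℕ → Z} {C : ℝ} (hz : ∀ j, ‖z j‖ ≤ C) {ε : ℝ}
    (hε : 0 < ε) (hTz : ∀ j, ε ≤ ‖T (z j)‖)
    (hcoord : ∀ k, Tendsto (fun j => T (z j) k) atTop (𝓝 0)) :
    ∃ (f : ℓ¹(ℕ, ℝ) →L[ℝ] Z) (c : ℝ), 0 < c ∧ ∀ a, c * ‖a‖ ≤ ‖f a‖ := by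
  obtain ⟨n, m, -, hm, hblock⟩ := lp.exists_gliding_hump hcoord (div_pos hε four_pos)
  let zn : ℓ^∞(ℕ, Z) :=
    ⟨fun i => z (n i), memℓp_infty ⟨C, Set.forall_mem_range.2 fun i => hz (n i)⟩⟩
  let Tzn := lp.mapCLM ∞ (fun _ => T) (norm_nonneg T) (fun _ => le_rfl) zn
  have hlow : ∀ a, ε / 2 * ‖a‖ ≤ ‖T‖ * ‖lp.synthesis zn a‖ := fun a => by
    have h := lp.le_norm_synthesis_of_blocks Tzn hm (fun i => hTz (n i)) (fun i => hblock i) a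
    rw [← lp.map_synthesis, show ε - 2 * (ε / 4) = ε / 2 by ring] at h
    exact h.trans (T.le_opNorm _)
  refine ⟨lp.synthesis zn, ε / 2 / (‖T‖ + 1), by positivity, fun a => ?_⟩
  rw [div_mul_eq_mul_div, div_le_iff₀ (by positivity)]
  nlinarith [hlow a, norm_nonneg (lp.synthesis zn a)]

/-- If a Banach space Z contains no subspace isomorphic to ℓ¹ (i.e., there is no bounded
linear embedding of ℓ¹ into Z that is bounded below), then every bounded linear map
from Z to ℓ¹ is compact. -/
theorem isCompactOperator_of_no_l1_copy
    {Z : Type*} [NormedAddCommGroup Z] [NormedSpace ℝ Z] [CompleteSpace Z]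
    (h : ¬ ∃ (f : lp (fun _ : ℕ => ℝ) 1 →L[ℝ] Z) (c : ℝ), 0 < c ∧
      ∀ x, c * ‖x‖ ≤ ‖f x‖)
    (T : Z →L[ℝ] lp (fun _ : ℕ => ℝ) 1) :
    IsCompactOperator T := by
  refine (isCompactOperator_iff_isCompact_closure_image_ball (T : Z →ₗ[ℝ] ℓ¹(ℕ, ℝ)) one_pos).2 ?_
  rw [ContinuousLinearMap.coe_coe]
  refine (TotallyBounded.closure ?_).isCompact_of_isClosed isClosed_closure
  by_contra hTB
  obtain ⟨ε, hε, w, hw, hsep⟩ := Metric.exists_separated_seq_of_not_totallyBounded hTB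
  choose x hx hTx using hw
  have hx1 : ∀ j, ‖x j‖ ≤ 1 := fun j => (mem_ball_zero_iff.1 (hx j)).le
  obtain ⟨L, φ, hφ, hL⟩ := lp.exists_subseq_tendsto_apply one_ne_zero (w := w) (C := ‖T‖)
    fun j => hTx j ▸ (T.le_opNorm_of_le (hx1 j)).trans_eq (mul_one _)
  refine h (exists_l1_embedding_of_tendsto_apply T (z := fun j => x (φ (j + 1)) - x (φ j))
    (C := 2) (fun j => ?_) hε (fun j => ?_) (fun k => ?_))
  · linarith [norm_sub_le (x (φ (j + 1))) (x (φ j)), hx1 (φ (j + 1)), hx1 (φ j)]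
  · rw [map_sub, hTx, hTx, ← dist_eq_norm, dist_comm]
    exact hsep _ _ (hφ j.lt_succ_self)
  · simpa [hTx] using ((hL k).comp (tendsto_add_atTop_nat 1)).sub (hL k)
end

section
/- Let Z be a Banach space such that every bounded linear map from Z into ℓ¹ (over ℕ) is compact, let Ξ be an index set, and let T : Z → ℓ¹(Ξ) be a bounded linear map. Then T is compact. -/
/-!
Compactness of an operator into a complete space is sequential: the image of every sequence in
the unit ball must have a Cauchy subsequence. Given such a sequence `(zₙ)`, all the `T zₙ` are
supported in the countable set `Γ = ⋃ₙ supp (T zₙ)`, and restricting to `Γ` followed by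
extension by zero along an injection `Γ ↪ ℕ` is a bounded operator `Φ : ℓ¹(Ξ) → ℓ¹(ℕ)` that is
isometric on vectors supported in `Γ`. By hypothesis `Φ ∘ T` is compact, so `(Φ T zₙ)` has a
Cauchy subsequence, and since `Φ` preserves the distances between the `T zₙ`, so does `(T zₙ)`.
-/

open Function Filter Topology Metric Set

theorem memℓp_one_iff {ι E : Type*} [NormedAddCommGroup E] {f : ι → E} :
    Memℓp f 1 ↔ Summable fun i => ‖f i‖ := by
  simpa using memℓp_gen_iff (p := 1) (f := f) (by norm_num)

theorem Function.support_norm {ι E : Type*} [NormedAddCommGroup E] (f : ι → E) :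
    support (fun i => ‖f i‖) = support f :=
  support_comp_eq (‖·‖) norm_eq_zero f

namespace lp

variable {ι κ 𝕜 E : Type*} [NormedField 𝕜] [NormedAddCommGroup E] [NormedSpace 𝕜 E]

theorem norm_eq_tsum_norm (f : ℓ¹(ι, E)) : ‖f‖ = ∑' i, ‖f i‖ := by
  simpa using norm_eq_tsum_rpow (p := 1) (by norm_num) f

theorem summable_norm (f : ℓ¹(ι, E)) : Summable fun i => ‖f i‖ :=
  memℓp_one_iff.1 f.2

theorem countable_support (f : ℓ¹(ι, E)) : (support f).Countable :=
  support_norm (E := E) f ▸ (summable_norm f).countable_support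

variable (𝕜 E) in
noncomputable def compInjective {g : ι → κ} (hg : Injective g) : ℓ¹(κ, E) →L[𝕜] ℓ¹(ι, E) :=
  LinearMap.mkContinuous
    { toFun f := ⟨f ∘ g, memℓp_one_iff.2 ((summable_norm f).comp_injective hg)⟩
      map_add' _ _ := rfl
      map_smul' _ _ := rfl }
    1 fun f => by
      rw [one_mul, norm_eq_tsum_norm, norm_eq_tsum_norm]
      exact tsum_comp_le_tsum_of_inj (summable_norm f) (fun _ => norm_nonneg _) hg

theorem compInjective_apply {g : ι → κ} (hg : Injective g) (f : ℓ¹(κ, E)) (i : ι) :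
    compInjective 𝕜 E hg f i = f (g i) :=
  rfl

theorem norm_compInjective {g : ι → κ} (hg : Injective g) {f : ℓ¹(κ, E)}
    (hf : support f ⊆ range g) : ‖compInjective 𝕜 E hg f‖ = ‖f‖ := by
  simp only [norm_eq_tsum_norm, compInjective_apply]
  exact hg.tsum_eq (f := fun k => ‖f k‖) ((support_norm (E := E) f).trans_subset hf)

theorem _root_.Function.norm_extend_zero (e : ι → κ) (f : ι → E) :
    (fun k => ‖extend e f 0 k‖) = extend e (fun i => ‖f i‖) 0 := by
  funext k
  rw [apply_extend (‖·‖)]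
  congr 1
  exact funext fun _ => by simp

theorem tsum_norm_extend_zero {e : ι → κ} (he : Injective e) (f : ι → E) :
    ∑' k, ‖extend e f 0 k‖ = ∑' i, ‖f i‖ := by
  rw [norm_extend_zero, tsum_extend_zero he]

variable (𝕜 E) in
noncomputable def extendZero {e : ι → κ} (he : Injective e) : ℓ¹(ι, E) →L[𝕜] ℓ¹(κ, E) :=
  LinearMap.mkContinuous
    { toFun f := ⟨extend e f 0, memℓp_one_iff.2 <| by
        rw [norm_extend_zero, summable_extend_zero he]; exact summable_norm f⟩
      map_add' f g := Subtype.ext <| by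
        change extend e (f + g : ι → E) 0 = extend e f 0 + extend e g 0
        simpa using extend_add e f g 0 0
      map_smul' c f := Subtype.ext <| by
        change extend e (c • f : ι → E) 0 = c • extend e f 0
        simpa using extend_smul c e f 0 }
    1 fun f => by
      rw [one_mul, norm_eq_tsum_norm, norm_eq_tsum_norm]
      exact (tsum_norm_extend_zero he f).le

theorem norm_extendZero {e : ι → κ} (he : Injective e) (f : ℓ¹(ι, E)) :
    ‖extendZero 𝕜 E he f‖ = ‖f‖ := by
  rw [norm_eq_tsum_norm, norm_eq_tsum_norm]
  exact tsum_norm_extend_zero he f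

theorem exists_clm_nat_norm_eq_of_support_subset {Γ : Set ι} (hΓ : Γ.Countable) :
    ∃ Φ : ℓ¹(ι, E) →L[𝕜] ℓ¹(ℕ, E), ∀ f : ℓ¹(ι, E), support f ⊆ Γ → ‖Φ f‖ = ‖f‖ := by
  have := hΓ.to_subtype
  obtain ⟨e, he⟩ := Countable.exists_injective_nat Γ
  refine ⟨(extendZero 𝕜 E he).comp (compInjective 𝕜 E Subtype.val_injective), fun f hf => ?_⟩
  rw [ContinuousLinearMap.comp_apply, norm_extendZero, norm_compInjective]
  rwa [Subtype.range_val]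

end lp

theorem isCompact_closure_of_exists_cauchySeq_subseq {X : Type*} [PseudoMetricSpace X]
    [CompleteSpace X] {s : Set X}
    (hs : ∀ u : ℕ → X, (∀ n, u n ∈ s) → ∃ φ : ℕ → ℕ, StrictMono φ ∧ CauchySeq (u ∘ φ)) :
    IsCompact (closure s) := by
  refine IsSeqCompact.isCompact fun u hu => ?_
  have approx (n : ℕ) : ∃ v ∈ s, dist (u n) v < 1 / (n + 1) :=
    Metric.mem_closure_iff.1 (hu n) _ Nat.one_div_pos_of_nat
  choose v hvs hv using approx
  obtain ⟨φ, hφ, hcauchy⟩ := hs v hvs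
  obtain ⟨a, ha⟩ := cauchySeq_tendsto_of_complete hcauchy
  have hdist : Tendsto (fun n => dist (v (φ n)) (u (φ n))) atTop (𝓝 0) :=
    squeeze_zero (fun _ => dist_nonneg) (fun n => ((dist_comm _ _).trans_lt (hv (φ n))).le)
      (tendsto_one_div_add_atTop_nhds_zero_nat.comp hφ.tendsto_atTop)
  exact ⟨a, mem_closure_of_tendsto ha (.of_forall fun n => hvs (φ n)), φ, hφ, ha.congr_dist hdist⟩

theorem CauchySeq.of_comp_of_dist_eq {X Y : Type*} [PseudoMetricSpace X] [PseudoMetricSpace Y]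
    {f : X → Y} {u : ℕ → X} (hf : ∀ m n, dist (f (u m)) (f (u n)) = dist (u m) (u n))
    (hu : CauchySeq (f ∘ u)) : CauchySeq u := by
  rw [Metric.cauchySeq_iff] at hu ⊢
  simpa only [comp_apply, hf] using hu

theorem isCompactOperator_iff_exists_cauchySeq_subseq {𝕜 E F : Type*} [NontriviallyNormedField 𝕜]
    [SeminormedAddCommGroup E] [NormedSpace 𝕜 E] [NormedAddCommGroup F] [NormedSpace 𝕜 F]
    [CompleteSpace F] (f : E →ₗ[𝕜] F) :
    IsCompactOperator f ↔ ∀ z : ℕ → E, (∀ n, z n ∈ closedBall 0 1) →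
      ∃ φ : ℕ → ℕ, StrictMono φ ∧ CauchySeq (f ∘ z ∘ φ) := by
  rw [isCompactOperator_iff_isCompact_closure_image_closedBall f one_pos]
  constructor
  · intro hK z hz
    obtain ⟨_, -, φ, hφ, hlim⟩ := hK.tendsto_subseq fun n => subset_closure ⟨z n, hz n, rfl⟩
    exact ⟨φ, hφ, hlim.cauchySeq⟩
  · refine fun h => isCompact_closure_of_exists_cauchySeq_subseq fun u hu => ?_
    choose z hz hzu using hu
    obtain ⟨φ, hφ, hcauchy⟩ := h z hz
    exact ⟨φ, hφ, by simpa only [comp_def, hzu] using hcauchy⟩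

theorem isCompactOperator_into_l1_of_index_set_general
    {Z : Type*} [NormedAddCommGroup Z] [NormedSpace ℝ Z]
    (h : ∀ T : Z →L[ℝ] lp (fun _ : ℕ => ℝ) 1, IsCompactOperator T)
    (Ξ : Type*) (T : Z →L[ℝ] lp (fun _ : Ξ => ℝ) 1) :
    IsCompactOperator T := by
  refine (isCompactOperator_iff_exists_cauchySeq_subseq T.toLinearMap).2 fun z hz => ?_
  obtain ⟨Φ, hΦ⟩ := lp.exists_clm_nat_norm_eq_of_support_subset (𝕜 := ℝ) (E := ℝ)
    (countable_iUnion fun n => lp.countable_support (T (z n)))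
  obtain ⟨φ, hφ, hcauchy⟩ :=
    (isCompactOperator_iff_exists_cauchySeq_subseq (Φ.comp T).toLinearMap).1 (h _) z hz
  have hsupp (m n : ℕ) : support ⇑(T (z m) - T (z n)) ⊆ ⋃ k, support (T (z k)) := by
    rw [lp.coeFn_sub]
    exact (support_sub _ _).trans <| union_subset
      (subset_iUnion (fun k => support (T (z k))) m) (subset_iUnion (fun k => support (T (z k))) n)
  refine ⟨φ, hφ, CauchySeq.of_comp_of_dist_eq (f := Φ) (fun m n => ?_) hcauchy⟩
  rw [dist_eq_norm, dist_eq_norm, ← map_sub]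
  exact hΦ _ (hsupp _ _)

/-- If every bounded linear map from Z into ℓ¹(ℕ) is compact, then every bounded linear
map from Z into ℓ¹(Ξ), for any index set Ξ, is compact. -/
theorem isCompactOperator_into_l1_of_index_set
    {Z : Type*} [NormedAddCommGroup Z] [NormedSpace ℝ Z] [CompleteSpace Z]
    (h : ∀ T : Z →L[ℝ] lp (fun _ : ℕ => ℝ) 1, IsCompactOperator T)
    (Ξ : Type*) (T : Z →L[ℝ] lp (fun _ : Ξ => ℝ) 1) :
    IsCompactOperator T :=
  isCompactOperator_into_l1_of_index_set_general h Ξ T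
end

section
/- Let A be an infinite-dimensional Banach algebra with trivial product, and Y a closed subspace of a Banach space X such that there is a bounded linear injection from X/Y into ℓ∞(ℕ, Y). Then there exists a continuous left A-module action on X (compatible with the trivial algebra structure, i.e. a·(b·x) = 0 for all a,b) such that, together with the trivial right action, ann_A X = Y. -/
/-!
Since `A` is infinite-dimensional it carries a biorthogonal sequence `fₙ (aₘ) = δₙₘ`. With
`Tₙ x` the `n`-th coordinate of `J (x + Y)`, put `a • x = ∑ wₙ fₙ(a) Tₙ x`, the weights `wₙ ≠ 0`
being small enough for the series to converge in operator norm. Every `Tₙ` maps into `Y` and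
kills `Y`, so `a • (b • x) = 0`; and `aₘ • x = wₘ Tₘ x`, so `x` is annihilated by `A` iff all
coordinates of `J (x + Y)` vanish, i.e. iff `x ∈ Y` by injectivity of `J`.
-/

open Submodule

section Biorthogonal

theorem LinearMap.not_ker_le_of_not_finiteDimensional {K E W : Type*} [Field K] [AddCommGroup E]
    [Module K E] [AddCommGroup W] [Module K W] [FiniteDimensional K W]
    (hinf : ¬ FiniteDimensional K E) (Φ : E →ₗ[K] W) (V : Submodule K E) [FiniteDimensional K V] :
    ¬ LinearMap.ker Φ ≤ V := by
  intro hker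
  have := Submodule.finiteDimensional_of_le hker
  refine hinf (Module.finite_def.mpr (fg_of_fg_map_of_fg_inf_ker Φ ?_ ?_))
  · exact IsNoetherian.noetherian _
  · rw [top_inf_eq, fg_iff_finiteDimensional]
    infer_instance

variable {𝕜 E : Type*} [RCLike 𝕜] [NormedAddCommGroup E] [NormedSpace 𝕜 E]

theorem Submodule.exists_strongDual_apply_eq_one_of_notMem {V : Submodule 𝕜 E}
    (hV : IsClosed (V : Set E)) {b : E} (hb : b ∉ V) :
    ∃ g : StrongDual 𝕜 E, g b = 1 ∧ ∀ v ∈ V, g v = 0 := by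
  have := hV -- the norm on `E ⧸ V` needs `V` closed as an instance
  have hb' : ‖V.mkQ b‖ ≠ 0 := by simpa [Submodule.Quotient.mk_eq_zero] using hb
  obtain ⟨g, -, hg⟩ := exists_dual_vector 𝕜 (V.mkQ b) hb'
  refine ⟨((‖V.mkQ b‖ : 𝕜)⁻¹ • g).comp V.mkQL, ?_, fun v hv => ?_⟩
  · rw [ContinuousLinearMap.comp_apply, mkQL_apply, smul_apply, hg, smul_eq_mul,
      inv_mul_cancel₀ (mod_cast hb')]
  · simp [(Submodule.Quotient.mk_eq_zero V).mpr hv]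

theorem exists_biorthogonal_extension (hinf : ¬ FiniteDimensional 𝕜 E)
    (s : Finset (E × StrongDual 𝕜 E)) :
    ∃ q : E × StrongDual 𝕜 E, q.2 q.1 = 1 ∧ ∀ p ∈ s, p.2 q.1 = 0 ∧ q.2 p.1 = 0 := by
  let V := span 𝕜 (Prod.fst '' (s : Set (E × StrongDual 𝕜 E)))
  have : FiniteDimensional 𝕜 V := Module.Finite.span_of_finite 𝕜 (s.finite_toSet.image _)
  let Φ : E →ₗ[𝕜] s → 𝕜 := LinearMap.pi fun p => (p.1.2 : E →ₗ[𝕜] 𝕜)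
  obtain ⟨b, hbΦ, hbV⟩ := Set.not_subset.mp (Φ.not_ker_le_of_not_finiteDimensional hinf V)
  obtain ⟨g, hgb, hgV⟩ :=
    V.exists_strongDual_apply_eq_one_of_notMem V.closed_of_finiteDimensional hbV
  exact ⟨(b, g), hgb, fun p hp =>
    ⟨congrFun (LinearMap.mem_ker.mp hbΦ) ⟨p, hp⟩, hgV _ (subset_span ⟨p, hp, rfl⟩)⟩⟩

theorem exists_biorthogonal_seq (hinf : ¬ FiniteDimensional 𝕜 E) :
    ∃ (a : ℕ → E) (f : ℕ → StrongDual 𝕜 E), ∀ n m, f n (a m) = if n = m then 1 else 0 := by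
  obtain ⟨c, hdiag, hoff⟩ := exists_seq_of_forall_finset_exists
    (fun q : E × StrongDual 𝕜 E => q.2 q.1 = 1) (fun p q => p.2 q.1 = 0 ∧ q.2 p.1 = 0)
    fun s _ => exists_biorthogonal_extension hinf s
  refine ⟨fun m => (c m).1, fun n => (c n).2, fun n m => ?_⟩
  rcases lt_trichotomy n m with h | rfl | h
  · simp [h.ne, (hoff n m h).1]
  · simp [hdiag n]
  · simp [h.ne', (hoff m n h).2]

end Biorthogonal

theorem exists_ne_zero_summable_smul {𝕜 E : Type*} [NontriviallyNormedField 𝕜]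
    [NormedAddCommGroup E] [NormedSpace 𝕜 E] [CompleteSpace E] (v : ℕ → E) :
    ∃ w : ℕ → 𝕜, (∀ n, w n ≠ 0) ∧ Summable fun n => w n • v n := by
  choose w hw₀ hw using fun n =>
    NormedField.exists_norm_lt 𝕜 (by positivity : (0 : ℝ) < (2 ^ n * (‖v n‖ + 1))⁻¹)
  refine ⟨w, fun n => norm_pos_iff.mp (hw₀ n), .of_norm_bounded summable_geometric_two fun n => ?_⟩
  calc ‖w n • v n‖ = ‖w n‖ * ‖v n‖ := norm_smul _ _
    _ ≤ (2 ^ n * (‖v n‖ + 1))⁻¹ * (‖v n‖ + 1) := by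
      gcongr
      exacts [(hw n).le, le_add_of_nonneg_right zero_le_one]
    _ = (1 / 2) ^ n := by
      rw [mul_inv, mul_assoc, inv_mul_cancel₀ (by positivity), mul_one, one_div, inv_pow]

section SeriesAction

variable {𝕜 A E F : Type*} [NontriviallyNormedField 𝕜] [NormedAddCommGroup A] [NormedSpace 𝕜 A]
  [NormedAddCommGroup E] [NormedSpace 𝕜 E] [NormedAddCommGroup F] [NormedSpace 𝕜 F]

noncomputable def seriesAction (w : ℕ → 𝕜) (f : ℕ → StrongDual 𝕜 A) (T : ℕ → E →L[𝕜] F) :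
    A →L[𝕜] E →L[𝕜] F :=
  ∑' n, w n • (f n).smulRight (T n)

variable {w : ℕ → 𝕜} {f : ℕ → StrongDual 𝕜 A} {T : ℕ → E →L[𝕜] F}

theorem hasSum_seriesAction_apply (hsum : Summable fun n => w n • (f n).smulRight (T n))
    (b : A) (x : E) :
    HasSum (fun n => w n • f n b • T n x) (seriesAction w f T b x) := by
  have := (hsum.hasSum.mapL (ContinuousLinearMap.apply 𝕜 _ b)).mapL
    (ContinuousLinearMap.apply 𝕜 _ x)
  simpa [seriesAction] using this

theorem seriesAction_apply_eq_zero_iff (hsum : Summable fun n => w n • (f n).smulRight (T n))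
    (hw : ∀ n, w n ≠ 0) {a : ℕ → A} (haf : ∀ n m, f n (a m) = if n = m then 1 else 0) (x : E) :
    (∀ b, seriesAction w f T b x = 0) ↔ ∀ n, T n x = 0 := by
  refine ⟨fun h m => ?_, fun h b => ?_⟩
  · have hsingle : HasSum (fun n => w n • f n (a m) • T n x) (w m • T m x) := by
      convert hasSum_single m fun n hn => ?_ using 1
      · simp [haf]
      · simp [haf, hn]
    have := (hsingle.unique (hasSum_seriesAction_apply hsum (a m) x)).trans (h (a m))
    exact (smul_eq_zero.mp this).resolve_left (hw m)
  · exact (hasSum_seriesAction_apply hsum b x).unique (by simp [h, hasSum_zero])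

theorem seriesAction_apply_mem_closure (hsum : Summable fun n => w n • (f n).smulRight (T n))
    (b : A) (x : E) :
    seriesAction w f T b x ∈ (span 𝕜 (⋃ n, Set.range (T n))).topologicalClosure := by
  refine isClosed_closure.mem_of_tendsto (hasSum_seriesAction_apply hsum b x).tendsto_sum_nat
    (.of_forall fun N => subset_closure ?_)
  exact sum_mem fun n _ =>
    smul_mem _ _ (smul_mem _ _ (subset_span (Set.mem_iUnion_of_mem n ⟨x, rfl⟩)))

end SeriesAction

theorem exists_clm_forall_apply_eq_zero_iff {𝕜 A E F : Type*} [RCLike 𝕜] [NormedAddCommGroup A]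
    [NormedSpace 𝕜 A] [NormedAddCommGroup E] [NormedSpace 𝕜 E] [NormedAddCommGroup F]
    [NormedSpace 𝕜 F] [CompleteSpace F] (hinf : ¬ FiniteDimensional 𝕜 A) (T : ℕ → E →L[𝕜] F) :
    ∃ L : A →L[𝕜] E →L[𝕜] F, (∀ x, (∀ b, L b x = 0) ↔ ∀ n, T n x = 0) ∧
      ∀ b x, L b x ∈ (span 𝕜 (⋃ n, Set.range (T n))).topologicalClosure := by
  obtain ⟨a, f, haf⟩ := exists_biorthogonal_seq hinf
  obtain ⟨w, hw, hsum⟩ := exists_ne_zero_summable_smul (𝕜 := 𝕜) fun n => (f n).smulRight (T n)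
  exact ⟨seriesAction w f T, seriesAction_apply_eq_zero_iff hsum hw haf,
    seriesAction_apply_mem_closure hsum⟩

theorem exists_module_action_with_annihilator_general
    {A : Type*} [NonUnitalNormedRing A] [NormedSpace ℝ A]
    (hinf : ¬ FiniteDimensional ℝ A)
    {X : Type*} [NormedAddCommGroup X] [NormedSpace ℝ X] [CompleteSpace X]
    (Y : Submodule ℝ X) (hY : IsClosed (Y : Set X))
    (J : (X ⧸ Y) →L[ℝ] lp (fun _ : ℕ => Y) ⊤) (hJ : Function.Injective J) :
    ∃ L : A →L[ℝ] X →L[ℝ] X,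
      (∀ (a b : A) (x : X), L a (L b x) = 0) ∧
      {x : X | ∀ a : A, L a x = 0} = (Y : Set X) := by
  let T : ℕ → X →L[ℝ] X := fun n =>
    Y.subtypeL ∘L lp.evalCLM ℝ (fun _ => Y) ⊤ n ∘L J ∘L Y.mkQL
  have hT : ∀ x, (∀ n, T n x = 0) ↔ x ∈ Y := fun x => by
    rw [← Submodule.Quotient.mk_eq_zero, ← map_eq_zero_iff J hJ, lp.ext_iff, lp.coeFn_zero]
    simp [T, lp.evalCLM, funext_iff]
  obtain ⟨L, hL, hLT⟩ := exists_clm_forall_apply_eq_zero_iff hinf T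
  have hLY : ∀ b x, L b x ∈ Y := fun b x =>
    topologicalClosure_minimal _ (span_le.mpr (Set.iUnion_subset fun n =>
      Set.range_subset_iff.mpr fun x => (J (Y.mkQ x) n).2)) hY (hLT b x)
  exact ⟨L, fun a b x => (hL _).mpr ((hT _).mpr (hLY b x)) a,
    Set.ext fun x => (hL x).trans (hT x)⟩

/-- Let A be an infinite-dimensional Banach algebra with trivial product, Y a closed
subspace of a Banach space X admitting a bounded linear injection of X/Y into ℓ∞(ℕ, Y).
Then there is a continuous left A-module action on X (compatible with the trivial product,
i.e. a·(b·x) = 0) such that, with the trivial right action, ann_A X = Y. -/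
theorem exists_module_action_with_annihilator
    {A : Type*} [NonUnitalNormedRing A] [NormedSpace ℝ A] [CompleteSpace A]
    (htriv : ∀ a b : A, a * b = 0) (hinf : ¬ FiniteDimensional ℝ A)
    {X : Type*} [NormedAddCommGroup X] [NormedSpace ℝ X] [CompleteSpace X]
    (Y : Submodule ℝ X) (hY : IsClosed (Y : Set X))
    (J : (X ⧸ Y) →L[ℝ] lp (fun _ : ℕ => Y) ⊤) (hJ : Function.Injective J) :
    ∃ L : A →L[ℝ] X →L[ℝ] X,
      (∀ (a b : A) (x : X), L a (L b x) = 0) ∧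
      {x : X | ∀ a : A, L a x = 0} = (Y : Set X) :=
  exists_module_action_with_annihilator_general hinf Y hY J hJ
end
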